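/- arXiv:2506.01179 — 5 statements merged into one kernel-verified Lean document; each statement's English description precedes it below -/
import Mathlib

section
/- In the divisor topology D(M), for each m ∈ M^#, the basic open set U_m is the smallest open set containing [m]; consequently D(M) is an Alexandrov space (arbitrary intersections of open sets are open). -/
open Submodule

variable (R M : Type) [CommRing R] [IsDomain R] [AddCommGroup M] [Module R M]

/-- The set of nonzero nongenerators of `M`. -/
def Msharp : Set M := {m | m ≠ 0 ∧ Submodule.span R {m} ≠ ⊤}

/-- Equivalence: `m ∼ n` iff `Rm = Rn`. -/
def divSetoid : Setoid (Msharp R M) :=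
  ⟨fun a b => Submodule.span R {a.1} = Submodule.span R {b.1},
    ⟨fun _ => rfl, fun h => h.symm, fun h₁ h₂ => h₁.trans h₂⟩⟩

/-- `EC(M^#)`: the set of equivalence classes. -/
def EC := Quotient (divSetoid R M)

/-- The class `[n]` of `n ∈ M^#`. -/
def cls (n : Msharp R M) : EC R M := Quotient.mk (divSetoid R M) n

/-- `U_m = {[n] : n ∣ m}` where `n ∣ m` means `m ∈ Rn`. -/
def Uset (m : M) : Set (EC R M) :=
  {c | ∃ n : Msharp R M, cls R M n = c ∧ m ∈ Submodule.span R {n.1}}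

/-- The divisor topology `D(M)`. -/
def divTop : TopologicalSpace (EC R M) :=
  TopologicalSpace.generateFrom {s | ∃ m ∈ Msharp R M, s = Uset R M m}

/-
In `D(M)`, `[n] ∈ U_k` says `k ∈ Rn`, so `[m] ∈ U_k` forces `Rk ≤ Rm` and hence `U_m ⊆ U_k`:
every basic open set containing `[m]` contains `U_m`, and this passes to all sets generated
from them by finite intersections and unions. A space in which every point has a smallest
open neighbourhood is Alexandrov, since an intersection of open sets contains the smallest
neighbourhood of each of its points.
-/

theorem TopologicalSpace.subset_of_isOpen_generateFrom {α : Type*} {B : Set (Set α)}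
    {x : α} {U O : Set α} (hU : ∀ s ∈ B, x ∈ s → U ⊆ s)
    (hO : (generateFrom B).IsOpen O) (hx : x ∈ O) : U ⊆ O := by
  induction hO with
  | basic s hs => exact hU s hs hx
  | univ => exact Set.subset_univ U
  | inter s t _ _ ihs iht => exact Set.subset_inter (ihs hx.1) (iht hx.2)
  | sUnion S _ ih =>
    obtain ⟨s, hsS, hxs⟩ := hx
    exact (ih s hsS hxs).trans (Set.subset_sUnion_of_mem hsS)

theorem alexandrovDiscrete_of_exists_minimal_open {α : Type*} [TopologicalSpace α]
    (h : ∀ x : α, ∃ U, IsOpen U ∧ x ∈ U ∧ ∀ O, IsOpen O → x ∈ O → U ⊆ O) :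
    AlexandrovDiscrete α where
  isOpen_sInter S hS := by
    refine isOpen_iff_forall_mem_open.2 fun x hx => ?_
    obtain ⟨U, hUopen, hxU, hUmin⟩ := h x
    exact ⟨U, Set.subset_sInter fun s hs => hUmin s (hS s hs) (hx s hs), hUopen, hxU⟩

omit [IsDomain R] in
theorem cls_mem_Uset_iff (n : Msharp R M) (k : M) :
    cls R M n ∈ Uset R M k ↔ k ∈ span R {n.1} := by
  refine ⟨fun ⟨p, hp, hkp⟩ => ?_, fun hk => ⟨n, rfl, hk⟩⟩
  have hspan : span R {p.1} = span R {n.1} := Quotient.exact hp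
  exact hspan ▸ hkp

omit [IsDomain R] in
theorem cls_mem_Uset (m : Msharp R M) : cls R M m ∈ Uset R M m.1 :=
  (cls_mem_Uset_iff R M m m.1).2 (mem_span_singleton_self _)

omit [IsDomain R] in
theorem Uset_subset_Uset_of_cls_mem {m : Msharp R M} {k : M} (h : cls R M m ∈ Uset R M k) :
    Uset R M m.1 ⊆ Uset R M k := by
  rintro _ ⟨p, rfl, hmp⟩
  exact (cls_mem_Uset_iff R M p k).2
    ((span_singleton_le_iff_mem _ _).2 hmp ((cls_mem_Uset_iff R M m k).1 h))

omit [IsDomain R] in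
theorem isOpen_Uset (m : Msharp R M) : (divTop R M).IsOpen (Uset R M m.1) :=
  TopologicalSpace.GenerateOpen.basic _ ⟨m.1, m.2, rfl⟩

omit [IsDomain R] in
theorem Uset_subset_of_isOpen (m : Msharp R M) {O : Set (EC R M)} (hO : (divTop R M).IsOpen O)
    (hm : cls R M m ∈ O) : Uset R M m.1 ⊆ O :=
  TopologicalSpace.subset_of_isOpen_generateFrom
    (by rintro _ ⟨k, -, rfl⟩ hk; exact Uset_subset_Uset_of_cls_mem R M hk) hO hm

theorem Uset_smallest_open_and_alexandrov :
    (∀ m : Msharp R M,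
      (divTop R M).IsOpen (Uset R M m.1) ∧ cls R M m ∈ Uset R M m.1 ∧
      ∀ O : Set (EC R M), (divTop R M).IsOpen O → cls R M m ∈ O → Uset R M m.1 ⊆ O) ∧
    (@AlexandrovDiscrete (EC R M) (divTop R M)) := by
  refine ⟨fun m => ⟨isOpen_Uset R M m, cls_mem_Uset R M m,
    fun O hO hm => Uset_subset_of_isOpen R M m hO hm⟩, ?_⟩
  exact @alexandrovDiscrete_of_exists_minimal_open _ (divTop R M) <| Quotient.ind fun m =>
    ⟨Uset R M m.1, isOpen_Uset R M m, cls_mem_Uset R M m,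
      fun _ hO hm => Uset_subset_of_isOpen R M m hO hm⟩
end

section
/- The ℤ-module ℤ/nℤ (with n > 1) is pseudo simple if and only if n = p, n = p², or n = pq for distinct primes p and q. -/
open Submodule

/-- An `R`-module `M` is pseudo simple if `Rm` is a simple module for every
nonzero `m ∈ M` with `Rm ≠ M`. -/
def PseudoSimple (R M : Type) [CommRing R] [AddCommGroup M] [Module R M] : Prop :=
  ∀ m : M, m ≠ 0 → Submodule.span R {m} ≠ ⊤ →
    IsSimpleModule R (Submodule.span R {m})

/-!
A cyclic submodule `ℤm` is a simple `ℤ`-module exactly when `m` has prime order, and in a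
finite group `ℤm` is everything exactly when the order of `m` is the order of the group. In the
cyclic group `ℤ/nℤ` the orders of elements are precisely the divisors of `n`, so pseudo
simplicity says that every divisor of `n` other than `1` and `n` is prime; writing
`n = (minFac n) * q` shows that this happens only for `n = p`, `p²` or `pq`.
-/

theorem isSimpleModule_int_iff_prime_card {M : Type*} [AddCommGroup M] :
    IsSimpleModule ℤ M ↔ (Nat.card M).Prime := by
  rw [isSimpleModule_iff, ← AddSubgroup.toIntSubmodule.isSimpleOrder_iff,
    ← AddCommGroup.is_simple_iff_prime_card, isSimpleOrder_iff, isSimpleAddGroup_iff,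
    AddSubgroup.nontrivial_iff]
  simp only [AddSubgroup.normal_of_isAddCommutative, forall_const]

theorem toAddSubgroup_span_int_singleton {M : Type*} [AddCommGroup M] (m : M) :
    (span ℤ {m}).toAddSubgroup = AddSubgroup.zmultiples m := by
  rw [span_int_eq_addSubgroupClosure, AddSubgroup.zmultiples_eq_closure]

theorem isSimpleModule_span_int_singleton_iff {M : Type*} [AddCommGroup M] (m : M) :
    IsSimpleModule ℤ (span ℤ {m}) ↔ (addOrderOf m).Prime := by
  rw [isSimpleModule_int_iff_prime_card, ← Nat.card_zmultiples,
    ← toAddSubgroup_span_int_singleton]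
  rfl

theorem span_int_singleton_eq_top_iff {M : Type*} [AddCommGroup M] [Finite M] (m : M) :
    span ℤ {m} = ⊤ ↔ addOrderOf m = Nat.card M := by
  rw [← toAddSubgroup_eq_top, toAddSubgroup_span_int_singleton, ← AddSubgroup.card_eq_iff_eq_top,
    Nat.card_zmultiples]

theorem pseudoSimple_int_iff {M : Type} [AddCommGroup M] [Finite M] :
    PseudoSimple ℤ M ↔ ∀ m : M, addOrderOf m ≠ 1 → addOrderOf m ≠ Nat.card M →
      (addOrderOf m).Prime := by
  simp only [PseudoSimple, isSimpleModule_span_int_singleton_iff, ne_eq,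
    span_int_singleton_eq_top_iff, AddMonoid.addOrderOf_eq_one_iff]

theorem IsAddCyclic.exists_addOrderOf_eq_of_dvd {M : Type*} [AddGroup M] [Finite M]
    [IsAddCyclic M] {d : ℕ} (hd : d ∣ Nat.card M) : ∃ m : M, addOrderOf m = d := by
  obtain ⟨g, hg⟩ := isAddCyclic_iff_exists_addOrderOf_eq_natCard.mp ‹_›
  rw [← hg] at hd
  exact ⟨(addOrderOf g / d) • g, addOrderOf_nsmul_addOrderOf_sub (hg ▸ Nat.card_pos.ne') hd⟩

theorem pseudoSimple_int_iff_of_isAddCyclic {M : Type} [AddCommGroup M] [Finite M]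
    [IsAddCyclic M] :
    PseudoSimple ℤ M ↔ ∀ d, d ∣ Nat.card M → d ≠ 1 → d ≠ Nat.card M → d.Prime := by
  rw [pseudoSimple_int_iff]
  constructor
  · intro h d hd
    obtain ⟨m, rfl⟩ := IsAddCyclic.exists_addOrderOf_eq_of_dvd hd
    exact h m
  · exact fun h m ↦ h _ (addOrderOf_dvd_natCard m)

theorem Nat.prime_of_dvd_mul_prime {p q d : ℕ} (hp : p.Prime) (hq : q.Prime) (hd : d ∣ p * q)
    (hd1 : d ≠ 1) (hdpq : d ≠ p * q) : d.Prime := by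
  obtain ⟨a, b, ha, hb, rfl⟩ := Nat.dvd_mul.mp hd
  rcases (Nat.dvd_prime hp).mp ha with rfl | rfl <;> rcases (Nat.dvd_prime hq).mp hb with rfl | rfl
  all_goals simp_all

theorem Nat.forall_proper_dvd_prime_iff {n : ℕ} (hn : 1 < n) :
    (∀ d, d ∣ n → d ≠ 1 → d ≠ n → d.Prime) ↔
      (∃ p : ℕ, p.Prime ∧ (n = p ∨ n = p ^ 2)) ∨
      (∃ p q : ℕ, p.Prime ∧ q.Prime ∧ p ≠ q ∧ n = p * q) := by
  constructor
  · intro h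
    obtain ⟨q, hn_eq⟩ := Nat.minFac_dvd n
    set p := n.minFac
    have hp : p.Prime := Nat.minFac_prime hn.ne'
    by_cases hq1 : q = 1
    · exact .inl ⟨p, hp, .inl (by rw [hn_eq, hq1, mul_one])⟩
    have hqn : q ≠ n := fun h ↦ by nlinarith [hp.one_lt]
    have hq : q.Prime := h q (Dvd.intro_left p hn_eq.symm) hq1 hqn
    by_cases hpq : p = q
    · exact .inl ⟨p, hp, .inr (by rw [hn_eq, ← hpq, sq])⟩
    · exact .inr ⟨p, q, hp, hq, hpq, hn_eq⟩
  · rintro (⟨p, hp, rfl | rfl⟩ | ⟨p, q, hp, hq, -, rfl⟩) d hd hd1 hdn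
    · exact ((Nat.dvd_prime hp).mp hd).elim (absurd · hd1) (absurd · hdn)
    · exact Nat.prime_of_dvd_mul_prime hp hp (sq p ▸ hd) hd1 (sq p ▸ hdn)
    · exact Nat.prime_of_dvd_mul_prime hp hq hd hd1 hdn

/-- The `ℤ`-module `ℤ/nℤ` (`n > 1`) is pseudo simple iff `n = p`, `n = p²`, or
`n = pq` for distinct primes `p, q`. -/
theorem zmod_pseudoSimple_iff (n : ℕ) (hn : 1 < n) :
    PseudoSimple ℤ (ZMod n) ↔
      (∃ p : ℕ, p.Prime ∧ (n = p ∨ n = p ^ 2)) ∨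
      (∃ p q : ℕ, p.Prime ∧ q.Prime ∧ p ≠ q ∧ n = p * q) := by
  have : NeZero n := ⟨by omega⟩
  rw [pseudoSimple_int_iff_of_isAddCyclic, Nat.card_zmod, Nat.forall_proper_dvd_prime_iff hn]
end

section
/- Let φ : M → N be an R-module homomorphism over a commutative ring R. (i) If M is pseudo simple and φ is surjective, then N is pseudo simple. (ii) If N is pseudo simple and φ is injective, then M is pseudo simple. -/
/-!
Everything reduces to comparing `Rm` with `Rφ(m) = φ(Rm)`. When `Rm` is simple, the restriction of
`φ` to it is zero or injective, so `Rφ(m) ≅ Rm` as soon as `φ(m) ≠ 0`; when `φ` is injective,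
`Rm ≅ Rφ(m)` outright. Surjectivity (resp. injectivity) of `φ` transports the condition `Rm ≠ M`.
-/

open Submodule

namespace Submodule

variable {R M N : Type*} [Ring R] [AddCommGroup M] [Module R M] [AddCommGroup N] [Module R N]

theorem isSimpleModule_map {S : Submodule R M} [IsSimpleModule R S] (f : M →ₗ[R] N)
    (hS : S.map f ≠ ⊥) : IsSimpleModule R (S.map f) := by
  have hrange : LinearMap.range (f ∘ₗ S.subtype) = S.map f := by
    rw [LinearMap.range_comp, range_subtype]
  obtain hinj | hzero := (f ∘ₗ S.subtype).injective_or_eq_zero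
  · exact .congr ((LinearEquiv.ofInjective _ hinj).trans (.ofEq _ _ hrange)).symm
  · rw [← hrange, hzero, LinearMap.range_zero] at hS
    exact absurd rfl hS

theorem isSimpleModule_of_map {S : Submodule R M} {f : M →ₗ[R] N} (hf : Function.Injective f)
    [IsSimpleModule R (S.map f)] : IsSimpleModule R S :=
  .congr (S.equivMapOfInjective f hf)

end Submodule

namespace PseudoSimple

variable {R M N : Type} [CommRing R] [AddCommGroup M] [Module R M] [AddCommGroup N] [Module R N]

theorem of_surjective {φ : M →ₗ[R] N} (hφ : Function.Surjective φ) (hM : PseudoSimple R M) :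
    PseudoSimple R N := by
  intro n hn hn_top
  obtain ⟨m, rfl⟩ := hφ n
  have hmap : (span R {m}).map φ = span R {φ m} := by rw [map_span, Set.image_singleton]
  have hm : m ≠ 0 := by rintro rfl; exact hn (map_zero φ)
  have hm_top : span R {m} ≠ ⊤ := fun h ↦
    hn_top (by rw [← hmap, h, Submodule.map_top, LinearMap.range_eq_top.mpr hφ])
  have := hM m hm hm_top
  rw [← hmap]
  exact isSimpleModule_map φ (by rwa [hmap, ne_eq, span_singleton_eq_bot])

theorem of_injective {φ : M →ₗ[R] N} (hφ : Function.Injective φ) (hN : PseudoSimple R N) :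
    PseudoSimple R M := by
  intro m hm hm_top
  have hmap : (span R {m}).map φ = span R {φ m} := by rw [map_span, Set.image_singleton]
  have hφm_top : span R {φ m} ≠ ⊤ := fun h ↦
    hm_top (by rw [← comap_map_eq_of_injective hφ (span R {m}), hmap, h, comap_top])
  have := hN (φ m) ((map_ne_zero_iff φ hφ).mpr hm) hφm_top
  rw [← hmap] at this
  exact isSimpleModule_of_map hφ

end PseudoSimple

/-- Pseudo simplicity passes along surjections forward and injections backward. -/
theorem pseudoSimple_hom (R M N : Type) [CommRing R] [AddCommGroup M] [Module R M]
    [AddCommGroup N] [Module R N] (φ : M →ₗ[R] N) :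
    (Function.Surjective φ → PseudoSimple R M → PseudoSimple R N) ∧
    (Function.Injective φ → PseudoSimple R N → PseudoSimple R M) :=
  ⟨fun hφ hM ↦ hM.of_surjective hφ, fun hφ hN ↦ hN.of_injective hφ⟩
end

section
/- Let M be a pseudo simple R-module over a commutative ring R and S a multiplicatively closed subset of R such that ann(m) ∩ S = ∅ for all nonzero nongenerator m ∈ M. Then the localization S⁻¹M is a pseudo simple S⁻¹R-module. -/
open Submodule

/-!
Write `x = m/s`. If `Rm = M` then `S⁻¹R · x = S⁻¹M`, so `m` is a nonzero nongenerator and `Rm` is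
simple. A nonzero multiple `(r/t) · x = (rm)/(ts)` has `rm ≠ 0`, so `rm` generates the simple
module `Rm`; writing `m = a (rm)` shows that `x` is a multiple of `(r/t) · x`, so `S⁻¹R · x` is
simple too.
-/

section Submodule

variable {R M : Type*} [Ring R] [AddCommGroup M] [Module R M]

theorem Submodule.span_singleton_smul_eq_of_isAtom {m : M} (hm : IsAtom (span R {m})) {r : R}
    (hr : r • m ≠ 0) : span R {r • m} = span R {m} :=
  (hm.le_iff.mp (span_singleton_smul_le R r m)).resolve_left (by rwa [span_singleton_eq_bot])

theorem Submodule.isAtom_span_singleton_of_mem_span_smul {x : M} (hx : x ≠ 0)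
    (h : ∀ c : R, c • x ≠ 0 → x ∈ span R {c • x}) : IsAtom (span R {x}) := by
  refine ⟨by rwa [Ne, span_singleton_eq_bot], fun P hP => ?_⟩
  by_contra hP0
  obtain ⟨y, hyP, hy0⟩ := exists_mem_ne_zero_of_ne_bot hP0
  obtain ⟨c, rfl⟩ := mem_span_singleton.mp (hP.le hyP)
  have hx_le : span R {x} ≤ P :=
    (span_singleton_le_iff_mem _ _).mpr (span_le.mpr (by simpa using hyP) (h c hy0))
  exact hP.not_ge hx_le

end Submodule

namespace LocalizedModule

variable {R M : Type*} [CommRing R] [AddCommGroup M] [Module R M] {S : Submonoid R}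

theorem mk_mem_span_mk_of_mem_span {m n : M} (hn : n ∈ span R {m}) (s t : S) :
    mk n t ∈ span (Localization S) {mk m s} := by
  obtain ⟨r, rfl⟩ := mem_span_singleton.mp hn
  have hmk : mk (r • m) t = Localization.mk (s * r) t • mk m s := by
    rw [mk_smul_mk, mul_smul, mul_comm t s]
    exact (mk_cancel_common_left s t _).symm
  rw [hmk]
  exact smul_mem _ _ (mem_span_singleton_self _)

theorem span_mk_eq_top {m : M} (hm : span R {m} = ⊤) (s : S) :
    span (Localization S) {mk m s} = ⊤ :=
  eq_top_iff.mpr fun x _ => x.induction_on fun _ t =>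
    mk_mem_span_mk_of_mem_span (hm ▸ mem_top) s t

end LocalizedModule

theorem pseudoSimple_localization_general (R M : Type) [CommRing R] [AddCommGroup M]
    [Module R M] (S : Submonoid R) (hM : PseudoSimple R M) :
    PseudoSimple (Localization S) (LocalizedModule S M) := by
  intro x hx hxtop
  induction x using LocalizedModule.induction_on with
  | _ m s =>
  have hm0 : m ≠ 0 := by
    rintro rfl
    exact hx (LocalizedModule.zero_mk s)
  have hm : IsAtom (span R {m}) := isSimpleModule_iff_isAtom.mp
    (hM m hm0 fun htop => hxtop (LocalizedModule.span_mk_eq_top htop s))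
  rw [isSimpleModule_iff_isAtom]
  refine isAtom_span_singleton_of_mem_span_smul hx fun c hc => ?_
  induction c using Localization.induction_on with
  | _ p =>
  obtain ⟨r, t⟩ := p
  rw [LocalizedModule.mk_smul_mk] at hc ⊢
  have hr : r • m ≠ 0 := by
    rintro hr
    exact hc (by rw [hr, LocalizedModule.zero_mk])
  have hm_mem : m ∈ span R {r • m} :=
    span_singleton_smul_eq_of_isAtom hm hr ▸ mem_span_singleton_self m
  exact LocalizedModule.mk_mem_span_mk_of_mem_span hm_mem _ _

/-- If `M` is pseudo simple and `ann(m) ∩ S = ∅` for all nonzero nongenerators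
`m`, then `S⁻¹M` is a pseudo simple `S⁻¹R`-module. -/
theorem pseudoSimple_localization (R M : Type) [CommRing R] [AddCommGroup M]
    [Module R M] (S : Submonoid R) (hM : PseudoSimple R M)
    (h : ∀ m : M, m ≠ 0 → Submodule.span R {m} ≠ ⊤ → ∀ s ∈ S, s • m ≠ 0) :
    PseudoSimple (Localization S) (LocalizedModule S M) :=
  pseudoSimple_localization_general R M S hM
end

section
/- Let M be a module over an integral domain R. The following are equivalent: (i) M is pseudo simple; (ii) M satisfies the (*)-condition (whenever m₁, m₂ ∈ M^# with Rm₁ ≠ Rm₂ and Rm₁ + Rm₂ ⊆ Rx, then Rx = M); (iii) D(M) is a discrete space; (iv) D(M) is Hausdorff; (v) D(M) is T1. -/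
open Submodule

variable (R M : Type) [CommRing R] [IsDomain R] [AddCommGroup M] [Module R M]

/-!
All five conditions say that the cyclic submodules `Rm`, `m ∈ M^#`, form an antichain under
inclusion. For pseudo simplicity and the `(*)`-condition this is lattice theory of cyclic
submodules. For the topology: if `Rm ⊆ Rn` then every basic open `U_a` containing `[m]` also
contains `[n]`, so `[m]` lies in the closure of `[n]` and a `T₁` topology forces `Rm = Rn`;
conversely, over an antichain `U_m = {[m]}`, so `D(M)` is discrete.
-/

theorem isAtom_span_singleton_iff {R M : Type*} [Semiring R] [AddCommMonoid M] [Module R M]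
    {m : M} :
    IsAtom (R ∙ m) ↔ m ≠ 0 ∧ ∀ n ∈ R ∙ m, n ≠ 0 → R ∙ n = R ∙ m := by
  refine ⟨fun h => ⟨fun hm => h.1 (by simp [hm]), fun n hn hn0 => ?_⟩,
    fun ⟨hm, h⟩ => ⟨?_, ?_⟩⟩
  · refine (h.le_iff.1 ((span_singleton_le_iff_mem n _).2 hn)).resolve_left ?_
    simpa using hn0
  · simpa using hm
  · intro N hN
    by_contra hN0
    obtain ⟨n, hnN, hn0⟩ := (Submodule.ne_bot_iff N).1 hN0
    have hnm : R ∙ n ≤ N := (span_singleton_le_iff_mem n N).2 hnN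
    exact hN.not_ge (h n (hN.le hnN) hn0 ▸ hnm)

section

variable {R M : Type} [CommRing R] [AddCommGroup M] [Module R M]

variable (R M) in
def cyclicNongenerators : Set (Submodule R M) := (fun m => R ∙ m) '' Msharp R M

variable (R M) in
def StarCondition : Prop :=
  ∀ m₁ m₂ : M, m₁ ∈ Msharp R M → m₂ ∈ Msharp R M → R ∙ m₁ ≠ R ∙ m₂ →
    ∀ x : M, R ∙ m₁ ⊔ R ∙ m₂ ≤ R ∙ x → R ∙ x = ⊤

theorem mem_msharp_of_span_le {m n : M} (hm : m ≠ 0) (hn : n ∈ Msharp R M)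
    (h : R ∙ m ≤ R ∙ n) : m ∈ Msharp R M :=
  ⟨hm, fun htop => hn.2 (top_le_iff.1 (htop ▸ h))⟩

theorem pseudoSimple_iff_isAntichain :
    PseudoSimple R M ↔ IsAntichain (· ≤ ·) (cyclicNongenerators R M) := by
  constructor
  · rintro h _ ⟨m, hm, rfl⟩ _ ⟨n, hn, rfl⟩ hne hle
    have hsimple := isAtom_span_singleton_iff.1 (isSimpleModule_iff_isAtom.1 (h n hn.1 hn.2))
    exact hne (hsimple.2 m ((span_singleton_le_iff_mem m _).1 hle) hm.1)
  · intro h m hm0 hmtop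
    refine isSimpleModule_iff_isAtom.2 (isAtom_span_singleton_iff.2 ⟨hm0, fun n hn hn0 => ?_⟩)
    have hnm : R ∙ n ≤ R ∙ m := (span_singleton_le_iff_mem n _).2 hn
    have hm : m ∈ Msharp R M := ⟨hm0, hmtop⟩
    exact h.eq ⟨n, mem_msharp_of_span_le hn0 hm hnm, rfl⟩ ⟨m, hm, rfl⟩ hnm

theorem starCondition_iff_isAntichain :
    StarCondition R M ↔ IsAntichain (· ≤ ·) (cyclicNongenerators R M) := by
  constructor
  · rintro h _ ⟨m, hm, rfl⟩ _ ⟨n, hn, rfl⟩ hne hle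
    exact hn.2 (h m n hm hn hne n (sup_le hle le_rfl))
  · intro h m₁ m₂ hm₁ hm₂ hne x hx
    by_contra hxtop
    have hx0 : x ≠ 0 := by
      rintro rfl
      exact hm₁.1 (by simpa using le_sup_left.trans hx)
    have hxs : (R ∙ x) ∈ cyclicNongenerators R M := ⟨x, ⟨hx0, hxtop⟩, rfl⟩
    exact hne ((h.eq ⟨m₁, hm₁, rfl⟩ hxs (le_sup_left.trans hx)).trans
      (h.eq ⟨m₂, hm₂, rfl⟩ hxs (le_sup_right.trans hx)).symm)

theorem cls_eq_cls_iff {a b : Msharp R M} : cls R M a = cls R M b ↔ R ∙ a.1 = R ∙ b.1 :=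
  Quotient.eq

theorem cls_surjective : Function.Surjective (cls R M) :=
  Quotient.mk_surjective

theorem mem_uset_cls_iff {m : M} {n : Msharp R M} : cls R M n ∈ Uset R M m ↔ m ∈ R ∙ n.1 :=
  ⟨fun ⟨n', hn', hm⟩ => cls_eq_cls_iff.1 hn' ▸ hm, fun hm => ⟨n, rfl, hm⟩⟩

attribute [local instance] divTop

theorem isOpen_uset {m : M} (hm : m ∈ Msharp R M) : IsOpen (Uset R M m) :=
  TopologicalSpace.isOpen_generateFrom_of_mem ⟨m, hm, rfl⟩

theorem cls_specializes_of_span_le {a b : Msharp R M} (h : R ∙ a.1 ≤ R ∙ b.1) :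
    cls R M b ⤳ cls R M a := by
  unfold Specializes divTop
  simp_rw [TopologicalSpace.nhds_generateFrom, le_iInf₂_iff]
  rintro _ ⟨has, m, hm, rfl⟩
  refine iInf₂_le _ ⟨?_, m, hm, rfl⟩
  exact mem_uset_cls_iff.2 (h (mem_uset_cls_iff.1 has))

theorem uset_eq_singleton (h : IsAntichain (· ≤ ·) (cyclicNongenerators R M)) (n : Msharp R M) :
    Uset R M n.1 = {cls R M n} := by
  ext c
  obtain ⟨k, rfl⟩ := cls_surjective c
  rw [Set.mem_singleton_iff, mem_uset_cls_iff, cls_eq_cls_iff, ← span_singleton_le_iff_mem]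
  exact ⟨fun hle => (h.eq ⟨n, n.2, rfl⟩ ⟨k, k.2, rfl⟩ hle).symm, fun e => e.ge⟩

theorem discreteTopology_of_isAntichain (h : IsAntichain (· ≤ ·) (cyclicNongenerators R M)) :
    DiscreteTopology (EC R M) := by
  refine discreteTopology_iff_isOpen_singleton.2 fun c => ?_
  obtain ⟨n, rfl⟩ := cls_surjective c
  exact uset_eq_singleton h n ▸ isOpen_uset n.2

theorem isAntichain_of_t1Space [T1Space (EC R M)] :
    IsAntichain (· ≤ ·) (cyclicNongenerators R M) := by
  rintro _ ⟨m, hm, rfl⟩ _ ⟨n, hn, rfl⟩ hne hle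
  have hspec := cls_specializes_of_span_le (a := ⟨m, hm⟩) (b := ⟨n, hn⟩) hle
  exact hne (cls_eq_cls_iff.1 hspec.eq).symm

end

theorem pseudoSimple_tfae :
    [PseudoSimple R M,
     ∀ m₁ m₂ : M, m₁ ∈ Msharp R M → m₂ ∈ Msharp R M →
       Submodule.span R {m₁} ≠ Submodule.span R {m₂} →
       ∀ x : M, Submodule.span R {m₁} ⊔ Submodule.span R {m₂} ≤ Submodule.span R {x} →
         Submodule.span R {x} = ⊤,
     @DiscreteTopology (EC R M) (divTop R M),
     @T2Space (EC R M) (divTop R M),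
     @T1Space (EC R M) (divTop R M)].TFAE := by
  tfae_have 1 ↔ 2 := pseudoSimple_iff_isAntichain.trans starCondition_iff_isAntichain.symm
  tfae_have 1 → 3 := fun h => discreteTopology_of_isAntichain (pseudoSimple_iff_isAntichain.1 h)
  tfae_have 3 → 4 := fun _ => inferInstance
  tfae_have 4 → 5 := fun _ => inferInstance
  tfae_have 5 → 1 := fun _ => pseudoSimple_iff_isAntichain.2 isAntichain_of_t1Space
  tfae_finish
end
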